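/- arXiv:2309.14256 — 6 statements merged into one kernel-verified Lean document; each statement's English description precedes it below -/
import Mathlib

section
/- Finite-sample unbiasedness of the Weighted PROCOVA estimator (Theorem 1): Let ω : ℝ^N → ℝ^N be a measurable function with ω_i(t) > 0 for every t ∈ ℝ^N and every i, let Ω̂ be the random N×N diagonal matrix with diagonal entries Ω̂_{ii} = ω_i(e_1², …, e_N²), and set β̂ = (Vᵀ Ω̂⁻¹ V)⁻¹ Vᵀ Ω̂⁻¹ y. If Vᵀ Ω̂⁻¹ V is almost surely invertible and β̂ is integrable, then E[β̂] = β. -/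
/-!
Write `X = (ε_1, …, ε_N)`. Since `(I - H) V = 0`, the residuals are `e = (I - H) X`, so the
weights `Ω̂` are an even function of `X`. On the event where `Vᵀ Ω̂⁻¹ V` is invertible,
`β̂ = β + G X` with `G t = (Vᵀ Ω̂(t)⁻¹ V)⁻¹ Vᵀ Ω̂(t)⁻¹ t`, which is therefore odd in `t`.
The law of `X`, a product of centred Gaussians, is invariant under `t ↦ -t`, so `E[G X] = 0`.
-/

open MeasureTheory ProbabilityTheory Matrix

namespace Matrix

variable {m n : Type*} [Fintype m] [Fintype n]

/- Real matrices carry the product measurable structure, the Borel structure of the entrywise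
topology. -/
instance instMeasurableSpaceReal : MeasurableSpace (Matrix m n ℝ) :=
  inferInstanceAs (MeasurableSpace (m → n → ℝ))

instance instSecondCountableTopologyReal : SecondCountableTopology (Matrix m n ℝ) :=
  inferInstanceAs (SecondCountableTopology (m → n → ℝ))

instance instBorelSpaceReal : BorelSpace (Matrix m n ℝ) :=
  inferInstanceAs (BorelSpace (m → n → ℝ))

variable [DecidableEq m] [DecidableEq n]

theorem measurable_inv : Measurable fun A : Matrix n n ℝ => A⁻¹ := by
  simp_rw [inv_def, Ring.inverse_eq_inv']
  exact continuous_id.matrix_det.measurable.inv.smul continuous_id.matrix_adjugate.measurable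

theorem one_sub_hat_mul_self {V : Matrix m n ℝ} (hV : IsUnit (Vᵀ * V).det) :
    (1 - V * (Vᵀ * V)⁻¹ * Vᵀ) * V = 0 := by
  rw [Matrix.sub_mul, Matrix.one_mul, Matrix.mul_assoc, nonsing_inv_mul_cancel_right _ _ hV,
    sub_self]

noncomputable def wlsCoeff (V : Matrix m n ℝ) (W : Matrix m m ℝ) : Matrix n m ℝ :=
  (Vᵀ * W⁻¹ * V)⁻¹ * (Vᵀ * W⁻¹)

theorem wlsCoeff_mul_self {V : Matrix m n ℝ} {W : Matrix m m ℝ}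
    (h : IsUnit (Vᵀ * W⁻¹ * V).det) : wlsCoeff V W * V = 1 := by
  rw [wlsCoeff, Matrix.mul_assoc]
  exact nonsing_inv_mul _ h

theorem measurable_wlsCoeff (V : Matrix m n ℝ) : Measurable (wlsCoeff V) := by
  have hC : Measurable fun W : Matrix m m ℝ => Vᵀ * W⁻¹ :=
    (continuous_const.matrix_mul continuous_id).measurable.comp measurable_inv
  have hB : Measurable fun W : Matrix m m ℝ => Vᵀ * W⁻¹ * V :=
    (continuous_id.matrix_mul continuous_const).measurable.comp hC
  exact (continuous_fst.matrix_mul continuous_snd).measurable.comp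
    ((measurable_inv.comp hB).prodMk hC)

theorem measurable_wlsCoeff_mulVec (V : Matrix m n ℝ) {W : (m → ℝ) → Matrix m m ℝ}
    (hW : Measurable W) : Measurable fun t => wlsCoeff V (W t) *ᵥ t :=
  (continuous_fst.matrix_mulVec continuous_snd).measurable.comp
    (((measurable_wlsCoeff V).comp hW).prodMk measurable_id)

end Matrix

section SymmetricLaw

variable {Ω E F : Type*} [MeasurableSpace Ω] {μ : Measure Ω}

theorem integral_eq_zero_of_odd [MeasurableSpace E] [AddGroup E] [MeasurableNeg E]
    [NormedAddCommGroup F] [NormedSpace ℝ F] (ν : Measure E) [ν.IsNegInvariant] {f : E → F}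
    (hf : ∀ t, f (-t) = -f t) : ∫ t, f t ∂ν = 0 := by
  have : IsAddTorsionFree F := .of_isTorsionFree ℝ F
  simp_rw [← self_eq_neg, ← integral_neg, ← hf, integral_neg_eq_self]

theorem integral_comp_eq_zero_of_odd [MeasurableSpace E] [AddGroup E] [MeasurableNeg E]
    [NormedAddCommGroup F] [NormedSpace ℝ F] {X : Ω → E} (hX : AEMeasurable X μ)
    [(μ.map X).IsNegInvariant] {f : E → F} (hfm : AEStronglyMeasurable f (μ.map X))
    (hf : ∀ t, f (-t) = -f t) : ∫ x, f (X x) ∂μ = 0 := by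
  rw [← integral_map hX hfm]
  exact integral_eq_zero_of_odd _ hf

instance isNegInvariant_gaussianReal_zero (v : NNReal) : (gaussianReal 0 v).IsNegInvariant :=
  ⟨by rw [Measure.neg, gaussianReal_map_neg, neg_zero]⟩

theorem isNegInvariant_map_of_iIndepFun_gaussianReal {ι : Type*} [Fintype ι]
    [IsProbabilityMeasure μ] {ε : ι → Ω → ℝ} (hmeas : ∀ i, Measurable (ε i))
    (hindep : iIndepFun ε μ) {v : ι → NNReal} (hgauss : ∀ i, μ.map (ε i) = gaussianReal 0 (v i)) :
    (μ.map fun x i => ε i x).IsNegInvariant := by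
  rw [hindep.map_fun_eq_pi_map fun i => (hmeas i).aemeasurable, funext hgauss]
  infer_instance

end SymmetricLaw

theorem weighted_procova_unbiased_general
    {N M : ℕ}
    {Ω : Type*} [MeasurableSpace Ω] (μ : Measure Ω) [IsProbabilityMeasure μ]
    (V : Matrix (Fin N) (Fin (M + 1)) ℝ) (hV : IsUnit (Vᵀ * V).det)
    (H : Matrix (Fin N) (Fin N) ℝ) (hH : H = V * (Vᵀ * V)⁻¹ * Vᵀ)
    (σ : Fin N → ℝ)
    (ε : Fin N → Ω → ℝ) (hmeas : ∀ i, Measurable (ε i))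
    (hindep : iIndepFun ε μ)
    (hgauss : ∀ i, Measure.map (ε i) μ = gaussianReal 0 ⟨σ i ^ 2, sq_nonneg (σ i)⟩)
    (β : Fin (M + 1) → ℝ)
    (y : Fin N → Ω → ℝ) (hy : ∀ i ω, y i ω = V.mulVec β i + ε i ω)
    (e : Fin N → Ω → ℝ) (he : ∀ i ω, e i ω = (1 - H).mulVec (fun j => y j ω) i)
    -- the weight function and the random diagonal weight matrix
    (w : (Fin N → ℝ) → Fin N → ℝ) (hwmeas : Measurable w)
    (Ωhat : Ω → Matrix (Fin N) (Fin N) ℝ)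
    (hΩhat : ∀ x, Ωhat x = Matrix.diagonal (w (fun i => e i x ^ 2)))
    -- the weighted least squares estimator
    (βhat : Ω → Fin (M + 1) → ℝ)
    (hβhat : ∀ x, βhat x
      = ((Vᵀ * (Ωhat x)⁻¹ * V)⁻¹ * (Vᵀ * (Ωhat x)⁻¹)).mulVec (fun i => y i x))
    (hinv : ∀ᵐ x ∂μ, IsUnit (Vᵀ * (Ωhat x)⁻¹ * V).det)
    (hint : ∀ j, Integrable (fun x => βhat x j) μ) :
    ∀ j, μ[fun x => βhat x j] = β j := by
  intro j
  set X : Ω → Fin N → ℝ := fun x i => ε i x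
  set D : (Fin N → ℝ) → Matrix (Fin N) (Fin N) ℝ :=
    fun t => diagonal (w fun i => ((1 - H) *ᵥ t) i ^ 2)
  set G : (Fin N → ℝ) → Fin (M + 1) → ℝ := fun t => wlsCoeff V (D t) *ᵥ t
  have hX : Measurable X := measurable_pi_lambda _ hmeas
  have hyX : ∀ x, (fun i => y i x) = V *ᵥ β + X x := fun x => funext (hy · x)
  have hresid : (1 - H) * V = 0 := hH ▸ one_sub_hat_mul_self hV
  have hΩD : ∀ x, Ωhat x = D (X x) := fun x => by
    simp_rw [hΩhat, he, hyX, mulVec_add, mulVec_mulVec, hresid, zero_mulVec, zero_add, D]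
  have hβG : ∀ᵐ x ∂μ, βhat x j - β j = G (X x) j := by
    filter_upwards [hinv] with x hx
    rw [hΩD] at hx
    rw [hβhat, hyX, hΩD, ← wlsCoeff, mulVec_add, mulVec_mulVec, wlsCoeff_mul_self hx,
      one_mulVec, Pi.add_apply, add_sub_cancel_left]
  have hG_odd : ∀ t, G (-t) j = -G t j := fun t => by
    simp only [G, D, mulVec_neg, Pi.neg_apply, neg_sq]
  have hD : Measurable D :=
    continuous_id.matrix_diagonal.measurable.comp <| hwmeas.comp <|
      (by fun_prop : Continuous fun t : Fin N → ℝ => fun i => ((1 - H) *ᵥ t) i ^ 2).measurable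
  have hG_meas : Measurable fun t => G t j :=
    (measurable_pi_apply j).comp (measurable_wlsCoeff_mulVec V hD)
  have := isNegInvariant_map_of_iIndepFun_gaussianReal hmeas hindep hgauss
  have hmean : ∫ x, G (X x) j ∂μ = 0 :=
    integral_comp_eq_zero_of_odd hX.aemeasurable hG_meas.aestronglyMeasurable hG_odd
  rw [← integral_congr_ae hβG, integral_sub (hint j) (integrable_const _)] at hmean
  simpa [sub_eq_zero] using hmean

/-- **Finite-sample unbiasedness of the Weighted PROCOVA estimator** (Theorem 1):
with weights `Ω̂_{ii} = w_i(e_1², …, e_N²)` given by a positive measurable function of the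
squared residuals, the weighted least squares estimator
`β̂ = (Vᵀ Ω̂⁻¹ V)⁻¹ Vᵀ Ω̂⁻¹ y` satisfies `E[β̂] = β`, provided `Vᵀ Ω̂⁻¹ V` is almost surely
invertible and `β̂` is integrable. -/
theorem weighted_procova_unbiased
    {N M : ℕ} (hNM : N > M + 1)
    {Ω : Type*} [MeasurableSpace Ω] (μ : Measure Ω) [IsProbabilityMeasure μ]
    (V : Matrix (Fin N) (Fin (M + 1)) ℝ) (hV : IsUnit (Vᵀ * V).det)
    (H : Matrix (Fin N) (Fin N) ℝ) (hH : H = V * (Vᵀ * V)⁻¹ * Vᵀ)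
    (σ : Fin N → ℝ) (hσ : ∀ i, 0 < σ i)
    (ε : Fin N → Ω → ℝ) (hmeas : ∀ i, Measurable (ε i))
    (hindep : iIndepFun ε μ)
    (hgauss : ∀ i, Measure.map (ε i) μ = gaussianReal 0 ⟨σ i ^ 2, sq_nonneg (σ i)⟩)
    (β : Fin (M + 1) → ℝ)
    (y : Fin N → Ω → ℝ) (hy : ∀ i ω, y i ω = V.mulVec β i + ε i ω)
    (e : Fin N → Ω → ℝ) (he : ∀ i ω, e i ω = (1 - H).mulVec (fun j => y j ω) i)
    -- the weight function and the random diagonal weight matrix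
    (w : (Fin N → ℝ) → Fin N → ℝ) (hwmeas : Measurable w) (hwpos : ∀ t i, 0 < w t i)
    (Ωhat : Ω → Matrix (Fin N) (Fin N) ℝ)
    (hΩhat : ∀ x, Ωhat x = Matrix.diagonal (w (fun i => e i x ^ 2)))
    -- the weighted least squares estimator
    (βhat : Ω → Fin (M + 1) → ℝ)
    (hβhat : ∀ x, βhat x
      = ((Vᵀ * (Ωhat x)⁻¹ * V)⁻¹ * (Vᵀ * (Ωhat x)⁻¹)).mulVec (fun i => y i x))
    (hinv : ∀ᵐ x ∂μ, IsUnit (Vᵀ * (Ωhat x)⁻¹ * V).det)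
    (hint : ∀ j, Integrable (fun x => βhat x j) μ) :
    ∀ j, μ[fun x => βhat x j] = β j :=
  weighted_procova_unbiased_general μ V hV H hH σ ε hmeas hindep hgauss β y hy e he w hwmeas Ωhat
    hΩhat βhat hβhat hinv hint
end

section
/- Key symmetry lemma for the unbiasedness theorem: Let 𝒢 be the σ-algebra generated by the random vector of squared residuals (e_1², …, e_N²). Then for each i, the conditional expectation of the error given the squared residuals vanishes: E[ε_i ∣ 𝒢] = 0 almost surely. Equivalently, for every bounded measurable φ : ℝ^N → ℝ one has E[ε_i · φ(e_1², …, e_N²)] = 0. -/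
open MeasureTheory ProbabilityTheory Matrix Finset
open Real
open scoped NNReal

lemma aux_integrable_id_gaussian {v : ℝ≥0} (hv : v ≠ 0) :
    Integrable (fun x : ℝ => x) (gaussianReal 0 v) := by
  have hv' : (0:ℝ) < v := lt_of_le_of_ne v.coe_nonneg (by exact_mod_cast hv.symm)
  rw [gaussianReal_of_var_ne_zero _ hv,
    integrable_withDensity_iff (measurable_gaussianPDF _ _)
      (ae_of_all _ fun x => ENNReal.ofReal_lt_top)]
  have h2 : (fun x : ℝ => x * (gaussianPDF 0 v x).toReal)
      = fun x => (Real.sqrt (2 * π * v))⁻¹ * (x * Real.exp (-(2*(v:ℝ))⁻¹ * x^2)) := by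
    funext x
    rw [gaussianPDF, ENNReal.toReal_ofReal (gaussianPDFReal_nonneg _ _ _), gaussianPDFReal]
    have : -(x - 0)^2 / (2 * (v:ℝ)) = -(2*(v:ℝ))⁻¹ * x^2 := by
      rw [sub_zero]; field_simp
    rw [this]; ring
  rw [h2]
  exact (integrable_mul_exp_neg_mul_sq (by positivity)).const_mul _

lemma aux_map_pi_of_iIndep {ι : Type*} [Fintype ι] {Ω : Type*} [MeasurableSpace Ω]
    (μ : Measure Ω) [IsProbabilityMeasure μ] (ε : ι → Ω → ℝ)
    (hmeas : ∀ i, Measurable (ε i))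
    (hindep : iIndepFun ε μ) :
    Measure.map (fun ω j => ε j ω) μ = Measure.pi (fun j => Measure.map (ε j) μ) := by
  refine (Measure.pi_eq fun s hs => ?_).symm
  rw [Measure.map_apply (measurable_pi_lambda _ hmeas) (MeasurableSet.univ_pi hs)]
  have hset : (fun ω j => ε j ω) ⁻¹' Set.pi Set.univ s
      = ⋂ j ∈ (Finset.univ : Finset ι), ε j ⁻¹' s j := by
    ext ω; simp [Set.mem_pi]
  rw [hset, hindep.measure_inter_preimage_eq_mul Finset.univ (fun j _ => hs j)]
  exact Finset.prod_congr rfl fun j _ => (Measure.map_apply (hmeas j) (hs j)).symm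

/-- **Key symmetry lemma for the unbiasedness theorem**: letting `𝒢` be the σ-algebra
generated by the vector of squared residuals `(e_1², …, e_N²)`, the conditional expectation
of each error given the squared residuals vanishes: `E[ε_i ∣ 𝒢] = 0` almost surely.
Equivalently, `E[ε_i · φ(e_1², …, e_N²)] = 0` for every bounded measurable `φ`. -/
theorem error_condexp_given_squared_residuals_eq_zero
    {N M : ℕ} (hNM : N > M + 1)
    {Ω : Type*} [MeasurableSpace Ω] (μ : Measure Ω) [IsProbabilityMeasure μ]
    (V : Matrix (Fin N) (Fin (M + 1)) ℝ) (hV : IsUnit (Vᵀ * V).det)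
    (H : Matrix (Fin N) (Fin N) ℝ) (hH : H = V * (Vᵀ * V)⁻¹ * Vᵀ)
    (σ : Fin N → ℝ) (hσ : ∀ i, 0 < σ i)
    (ε : Fin N → Ω → ℝ) (hmeas : ∀ i, Measurable (ε i))
    (hindep : iIndepFun ε μ)
    (hgauss : ∀ i, Measure.map (ε i) μ = gaussianReal 0 ⟨σ i ^ 2, sq_nonneg (σ i)⟩)
    (β : Fin (M + 1) → ℝ)
    (y : Fin N → Ω → ℝ) (hy : ∀ i ω, y i ω = V.mulVec β i + ε i ω)
    (e : Fin N → Ω → ℝ) (he : ∀ i ω, e i ω = (1 - H).mulVec (fun j => y j ω) i)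
    (i : Fin N) :
    μ[ε i | MeasurableSpace.comap (fun x (j : Fin N) => e j x ^ 2) inferInstance] =ᵐ[μ] 0
      ∧ ∀ φ : (Fin N → ℝ) → ℝ, Measurable φ → (∃ C, ∀ t, |φ t| ≤ C) →
          μ[fun x => ε i x * φ (fun j => e j x ^ 2)] = 0 := by
  -- the residuals in terms of the errors
  have hHV : (1 - H) * V = 0 := by
    rw [hH, Matrix.sub_mul, Matrix.one_mul, Matrix.mul_assoc, Matrix.mul_assoc,
      Matrix.nonsing_inv_mul _ hV, Matrix.mul_one, sub_self]
  have hεe : ∀ j ω, e j ω = (1 - H).mulVec (fun k => ε k ω) j := by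
    intro j ω
    rw [he]
    have h1 : (fun k => y k ω) = V.mulVec β + (fun k => ε k ω) :=
      funext fun k => hy k ω
    rw [h1, Matrix.mulVec_add, Matrix.mulVec_mulVec, hHV]
    simp [Matrix.zero_mulVec]
  -- measurability facts
  have hmul : ∀ j : Fin N, Measurable fun x : Fin N → ℝ => (1 - H).mulVec x j := by
    intro j
    simp only [Matrix.mulVec, dotProduct]
    exact Finset.measurable_sum _ fun k _ => (measurable_pi_apply k).const_mul _
  have hemeas : ∀ j, Measurable (e j) := by
    intro j
    have : e j = (fun x : Fin N → ℝ => (1 - H).mulVec x j) ∘ (fun ω k => ε k ω) :=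
      funext fun ω => hεe j ω
    rw [this]
    exact (hmul j).comp (measurable_pi_lambda _ hmeas)
  have hg : Measurable (fun x (j : Fin N) => e j x ^ 2) :=
    measurable_pi_lambda _ fun j => (hemeas j).pow_const 2
  have hm : MeasurableSpace.comap (fun x (j : Fin N) => e j x ^ 2) inferInstance ≤ _ :=
    hg.comap_le
  -- equality of laws of ε and -ε
  have hεvec : Measurable (fun ω (j : Fin N) => ε j ω) := measurable_pi_lambda _ hmeas
  have hnegvec : Measurable (fun ω (j : Fin N) => -(ε j ω)) :=
    measurable_pi_lambda _ fun j => (hmeas j).neg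
  have hlaw : Measure.map (fun ω (j : Fin N) => -(ε j ω)) μ
      = Measure.map (fun ω (j : Fin N) => ε j ω) μ := by
    have hindep' : iIndepFun (fun j => Neg.neg ∘ ε j) μ :=
      hindep.comp (fun _ => Neg.neg) (fun _ => measurable_neg)
    have h1 := aux_map_pi_of_iIndep μ (fun j => Neg.neg ∘ ε j)
      (fun j => (hmeas j).neg) hindep'
    have h2 := aux_map_pi_of_iIndep μ ε hmeas hindep
    have h3 : (fun ω (j : Fin N) => -(ε j ω)) = (fun ω j => (Neg.neg ∘ ε j) ω) := rfl
    rw [h3, h1, h2]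
    congr 1
    funext j
    rw [← Measure.map_map measurable_neg (hmeas j), hgauss j]
    have h4 := gaussianReal_map_const_mul (μ := 0) (v := ⟨σ j ^ 2, sq_nonneg (σ j)⟩) (-1)
    have h5 : (fun x : ℝ => (-1 : ℝ) * x) = Neg.neg := by
      funext x; simp [neg_one_mul]
    have h6 : (⟨(-1 : ℝ) ^ 2, sq_nonneg _⟩ : ℝ≥0) = 1 := by
      ext; norm_num
    rw [h5] at h4
    rw [h4]
    congr 1
    · simp
    · apply NNReal.eq
      change (-1 : ℝ) ^ 2 * σ j ^ 2 = σ j ^ 2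
      norm_num
  -- the key integral identity
  have key : ∀ φ : (Fin N → ℝ) → ℝ, Measurable φ →
      μ[fun x => ε i x * φ (fun j => e j x ^ 2)] = 0 := by
    intro φ hφ
    set F : (Fin N → ℝ) → ℝ :=
      fun x => x i * φ (fun j => ((1 - H).mulVec x j) ^ 2) with hF
    have hFmeas : Measurable F :=
      (measurable_pi_apply i).mul
        (hφ.comp (measurable_pi_lambda _ fun j => (hmul j).pow_const 2))
    have hFneg : ∀ v : Fin N → ℝ, F (fun j => -(v j)) = -F v := by
      intro v
      have hv : (fun j => -(v j)) = -v := rfl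
      simp only [hF, hv, Matrix.mulVec_neg, Pi.neg_apply, neg_sq, neg_mul]
    have hstep : (fun x => ε i x * φ (fun j => e j x ^ 2))
        = fun x => F (fun j => ε j x) := by
      funext x
      simp only [hF]
      congr 2
      funext j
      rw [hεe]
    have hA : ∫ x, F (fun j => ε j x) ∂μ
        = ∫ v, F v ∂(Measure.map (fun ω (j : Fin N) => ε j ω) μ) :=
      (integral_map hεvec.aemeasurable hFmeas.aestronglyMeasurable).symm
    have hB : ∫ v, F v ∂(Measure.map (fun ω (j : Fin N) => -(ε j ω)) μ)
        = ∫ x, F (fun j => -(ε j x)) ∂μ :=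
      integral_map hnegvec.aemeasurable hFmeas.aestronglyMeasurable
    have hC : ∫ x, F (fun j => -(ε j x)) ∂μ = -∫ x, F (fun j => ε j x) ∂μ := by
      rw [← integral_neg]
      congr 1
      funext x
      exact hFneg (fun j => ε j x)
    have : ∫ x, F (fun j => ε j x) ∂μ = -∫ x, F (fun j => ε j x) ∂μ := by
      conv_lhs => rw [hA, ← hlaw, hB, hC]
    rw [hstep]
    linarith
  refine ⟨?_, fun φ hφ _ => key φ hφ⟩
  -- integrability of ε i
  have hv0 : (⟨σ i ^ 2, sq_nonneg (σ i)⟩ : ℝ≥0) ≠ 0 := by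
    intro h
    have := congrArg NNReal.toReal h
    change σ i ^ 2 = (0 : ℝ) at this
    exact absurd this (pow_ne_zero 2 (hσ i).ne')
  have hint : Integrable (ε i) μ := by
    have h1 : Integrable (fun x : ℝ => x) (Measure.map (ε i) μ) := by
      rw [hgauss i]; exact aux_integrable_id_gaussian hv0
    exact (integrable_map_measure aestronglyMeasurable_id (hmeas i).aemeasurable).mp h1
  haveI : IsFiniteMeasure (μ.trim hm) := isFiniteMeasure_trim hm
  refine (ae_eq_condExp_of_forall_setIntegral_eq hm hint
    (fun s _ _ => (integrable_zero _ _ _).integrableOn)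
    (fun s hs _ => ?_)
    (stronglyMeasurable_zero.aestronglyMeasurable)).symm
  obtain ⟨t, ht, rfl⟩ := hs
  have h1 := key (t.indicator fun _ => 1) (measurable_const.indicator ht)
  have h2 : ∫ x in (fun x (j : Fin N) => e j x ^ 2) ⁻¹' t, ε i x ∂μ
      = ∫ x, ε i x * t.indicator (fun _ => (1:ℝ)) (fun j => e j x ^ 2) ∂μ := by
    rw [← integral_indicator (hm _ ⟨t, ht, rfl⟩)]
    congr 1
    funext x
    by_cases hx : (fun j => e j x ^ 2) ∈ t
    · simp [Set.indicator_apply, hx, Set.mem_preimage]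
    · simp [Set.indicator_apply, hx, Set.mem_preimage]
  simp only [Pi.zero_apply, integral_zero]
  rw [h2, h1]
end

section
/- Expectation of the log of a squared centered Gaussian: let v > 0 and let X be a Gaussian random variable with mean 0 and variance v. Then E[log(X²)] = log v − (γ_EM + log 2), where γ_EM is the Euler–Mascheroni constant. -/
/-!
Substituting `t = x² / (2v)` turns `E[log X²]` into
`π^(-1/2) ∫₀^∞ t^(-1/2) e^(-t) log (2vt) dt = log (2v) + Γ'(1/2) / Γ(1/2)`, where the
second term comes from differentiating Euler's integral for `Γ` under the integral sign,
and `Γ'(1/2) = -√π (γ + 2 log 2)`.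
-/

open MeasureTheory ProbabilityTheory Real Set Asymptotics Filter
open scoped NNReal Topology

namespace Real

lemma ofReal_rpow_mul_log_mul_exp_neg {s t : ℝ} (ht : 0 < t) :
    (t : ℂ) ^ ((s : ℂ) - 1) * (log t * exp (-t))
      = ((t ^ (s - 1) * (log t * exp (-t)) : ℝ) : ℂ) := by
  rw [← Complex.ofReal_one, ← Complex.ofReal_sub, ← Complex.ofReal_cpow ht.le]
  push_cast
  rfl

lemma integrableOn_rpow_mul_log_mul_exp_neg {s : ℝ} (hs : 0 < s) :
    IntegrableOn (fun t : ℝ ↦ t ^ (s - 1) * (log t * exp (-t))) (Ioi 0) := by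
  have hexp : Continuous fun t : ℝ ↦ (exp (-t) : ℂ) := by fun_prop
  have hmellin := (mellin_hasDerivAt_of_isBigO_rpow (E := ℂ) (s := s) (a := s + 1) (b := 0)
    (hexp.continuousOn.locallyIntegrableOn measurableSet_Ioi) ?_ (by simp) ?_ (by simpa)).1
  · refine IntegrableOn.congr_fun hmellin.re (fun t ht ↦ ?_) measurableSet_Ioi
    simp only [smul_eq_mul, Complex.real_smul, ofReal_rpow_mul_log_mul_exp_neg ht,
      RCLike.re_to_complex, Complex.ofReal_re]
  · rw [← isBigO_norm_left]
    simp_rw [Complex.norm_real, isBigO_norm_left]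
    simpa only [neg_one_mul] using (isLittleO_exp_neg_mul_rpow_atTop zero_lt_one _).isBigO
  · simp_rw [neg_zero, rpow_zero]
    refine isBigO_const_of_tendsto (?_ : Tendsto _ _ (𝓝 (1 : ℂ))) one_ne_zero
    simpa using (hexp.tendsto 0).mono_left nhdsWithin_le_nhds

lemma hasDerivAt_Gamma_integral {s : ℝ} (hs : 0 < s) :
    HasDerivAt Gamma (∫ t in Ioi 0, t ^ (s - 1) * (log t * exp (-t))) s := by
  have hGammaIntegral := Complex.hasDerivAt_GammaIntegral (s := s) (by simpa)
  rw [setIntegral_congr_fun measurableSet_Ioi fun t ht ↦ ofReal_rpow_mul_log_mul_exp_neg ht,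
    integral_complex_ofReal] at hGammaIntegral
  have hGamma : HasDerivAt Complex.Gamma _ (s : ℂ) := hGammaIntegral.congr_of_eventuallyEq <| by
    filter_upwards [(isOpen_lt continuous_const Complex.continuous_re).mem_nhds (by simpa)]
      with z hz using Complex.Gamma_eq_integral hz
  simpa [Complex.Gamma_ofReal] using hGamma.real_of_complex

lemma integral_rpow_mul_exp_neg_mul_log_const_mul {s c : ℝ} (hs : 0 < s) (hc : 0 < c) :
    ∫ t in Ioi 0, t ^ (s - 1) * exp (-t) * log (c * t) = log c * Gamma s + deriv Gamma s := by
  have hGamma : IntegrableOn (fun t : ℝ ↦ exp (-t) * t ^ (s - 1)) (Ioi 0) :=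
    GammaIntegral_convergent hs
  rw [(hasDerivAt_Gamma_integral hs).deriv, Gamma_eq_integral hs, ← integral_const_mul,
    ← integral_add (hGamma.const_mul _) (integrableOn_rpow_mul_log_mul_exp_neg hs)]
  refine setIntegral_congr_fun measurableSet_Ioi fun t (ht : 0 < t) ↦ ?_
  rw [log_mul hc.ne' ht.ne']
  ring

end Real

namespace ProbabilityTheory

lemma integral_comp_sq_gaussianReal (f : ℝ → ℝ) {v : ℝ≥0} (hv : v ≠ 0) :
    ∫ x, f (x ^ 2) ∂gaussianReal 0 v
      = (√π)⁻¹ * ∫ t in Ioi 0, t ^ ((1 / 2 : ℝ) - 1) * exp (-t) * f (2 * v * t) := by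
  have hv' : (0 : ℝ) < 2 * v := by positivity
  calc ∫ x, f (x ^ 2) ∂gaussianReal 0 v
      = ∫ x, gaussianPDFReal 0 v |x| * f (|x| ^ 2) := by
        simp [integral_gaussianReal_eq_integral_smul hv, gaussianPDFReal]
    _ = 2 * ∫ y in Ioi 0, gaussianPDFReal 0 v y * f (y ^ 2) :=
        integral_comp_abs (f := fun y ↦ gaussianPDFReal 0 v y * f (y ^ 2))
    _ = 2 * ∫ x in Ioi 0, 1 / 2 * x ^ ((1 / 2 : ℝ) - 1) *
          (gaussianPDFReal 0 v (x ^ (1 / 2 : ℝ)) * f ((x ^ (1 / 2 : ℝ)) ^ 2)) := by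
        rw [← integral_comp_rpow_Ioi_of_pos (by norm_num : (0 : ℝ) < 1 / 2)]
        rfl
    _ = 2 * (2 * v * ∫ t in Ioi 0, 1 / 2 * (2 * v * t) ^ ((1 / 2 : ℝ) - 1) *
          (gaussianPDFReal 0 v ((2 * v * t) ^ (1 / 2 : ℝ)) *
            f (((2 * v * t) ^ (1 / 2 : ℝ)) ^ 2))) := by
        congr 1
        simpa only [mul_zero, smul_eq_mul] using
          (integral_comp_mul_left_Ioi' (E := ℝ) _ 0 hv').symm
    _ = (√π)⁻¹ * ∫ t in Ioi 0, t ^ ((1 / 2 : ℝ) - 1) * exp (-t) * f (2 * v * t) := by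
        rw [← integral_const_mul, ← integral_const_mul, ← integral_const_mul]
        refine setIntegral_congr_fun measurableSet_Ioi fun t (ht : 0 < t) ↦ ?_
        have hsq : ((2 * v * t) ^ (1 / 2 : ℝ)) ^ 2 = 2 * v * t := by
          rw [← sqrt_eq_rpow, sq_sqrt (by positivity)]
        have hrpow :
            (2 * v * t) ^ ((1 / 2 : ℝ) - 1) = (√(2 * v))⁻¹ * t ^ ((1 / 2 : ℝ) - 1) := by
          rw [mul_rpow hv'.le ht.le, sqrt_eq_rpow, ← rpow_neg hv'.le]
          norm_num
        have hsqrt : √(2 * π * v) = √π * √(2 * v) := by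
          rw [← sqrt_mul pi_pos.le]
          ring_nf
        have hexp : -(2 * v * t) / (2 * v) = -t := by
          field_simp
        rw [gaussianPDFReal, sub_zero, hsq, hexp, hrpow, hsqrt]
        field_simp
        rw [sq_sqrt hv'.le]

end ProbabilityTheory

theorem integral_log_sq_gaussian_general
    {Ω : Type*} [MeasurableSpace Ω] (μ : Measure Ω)
    (v : ℝ) (hv : 0 < v) (X : Ω → ℝ) (hXm : AEMeasurable X μ)
    (hX : Measure.map X μ = gaussianReal 0 ⟨v, hv.le⟩) :
    μ[fun ω => Real.log (X ω ^ 2)]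
      = Real.log v - (Real.eulerMascheroniConstant + Real.log 2) := by
  have hv₀ : (⟨v, hv.le⟩ : ℝ≥0) ≠ 0 := by simpa [← NNReal.coe_ne_zero] using hv.ne'
  calc μ[fun ω => log (X ω ^ 2)]
      = ∫ x, log (x ^ 2) ∂gaussianReal 0 ⟨v, hv.le⟩ := by
        have hlog : Measurable fun x : ℝ ↦ log (x ^ 2) := by fun_prop
        rw [← hX, integral_map hXm hlog.aestronglyMeasurable]
    _ = (√π)⁻¹ * (log (2 * v) * Gamma (1 / 2) + deriv Gamma (1 / 2)) := by
        rw [integral_comp_sq_gaussianReal log hv₀,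
          integral_rpow_mul_exp_neg_mul_log_const_mul (by norm_num) (by positivity)]
        rfl
    _ = log v - (eulerMascheroniConstant + log 2) := by
        rw [Gamma_one_half_eq, hasDerivAt_Gamma_one_half.deriv, log_mul two_ne_zero hv.ne']
        field_simp
        ring

/-- **Expectation of the log of a squared centered Gaussian**: if `X ~ N(0, v)` with `v > 0`,
then `E[log(X²)] = log v − (γ_EM + log 2)`, where `γ_EM` is the Euler–Mascheroni constant. -/
theorem integral_log_sq_gaussian
    {Ω : Type*} [MeasurableSpace Ω] (μ : Measure Ω) [IsProbabilityMeasure μ]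
    (v : ℝ) (hv : 0 < v) (X : Ω → ℝ) (hXm : AEMeasurable X μ)
    (hX : Measure.map X μ = gaussianReal 0 ⟨v, hv.le⟩) :
    μ[fun ω => Real.log (X ω ^ 2)]
      = Real.log v - (Real.eulerMascheroniConstant + Real.log 2) :=
  integral_log_sq_gaussian_general μ v hv X hXm hX
end

section
/- Proposition 1 (expectation of the skedastic slope estimator): E[γ̂₁] = [ Σ_{i=1}^N (log(s_i²) − m̄) · log v_i ] / [ Σ_{k=1}^N (log(s_k²) − m̄)² ]. -/
/-!
The slope estimator is the fixed linear combination `γ̂₁ = ∑ⱼ wⱼ log eⱼ²` of the log squared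
residuals, with weights `wⱼ = (log sⱼ² - m̄) / ∑ₖ (log sₖ² - m̄)²` that sum to zero.
Since `(1 - H) V = 0`, each residual `eᵢ = ∑ⱼ (1 - H)ᵢⱼ εⱼ` is a combination of independent centred
Gaussians, so `eᵢ` has the law of `√vᵢ Z` with `Z` standard normal and
`E[log eᵢ²] = log vᵢ + E[log Z²]`. The constant `E[log Z²]` (which is `-γ_EM - log 2`) is finite,
because `log` is integrable against a bounded density near `0` and dominated by `|x|` away from it,
and it is annihilated by the zero-sum weights.
-/

open scoped NNReal

namespace Matrix

variable {R : Type*} [CommRing R] {m n : Type*} [Fintype m] [Fintype n]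

lemma mul_nonsing_inv_mul_mul_self [DecidableEq n] (A : Matrix m n R) (B : Matrix n m R)
    (h : IsUnit (B * A).det) : A * (B * A)⁻¹ * B * A = A := by
  rw [Matrix.mul_assoc _ B A, Matrix.mul_assoc A, nonsing_inv_mul _ h, Matrix.mul_one]

lemma one_sub_mulVec_add_of_mul_eq [DecidableEq m] {H : Matrix m m R} {V : Matrix m n R}
    (hHV : H * V = V) (β : n → R) (x : m → R) : (1 - H) *ᵥ (V *ᵥ β + x) = (1 - H) *ᵥ x := by
  rw [mulVec_add, mulVec_mulVec, Matrix.sub_mul, Matrix.one_mul, hHV, sub_self, zero_mulVec,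
    zero_add]

lemma sum_sq_one_sub_apply_mul [DecidableEq m] (A : Matrix m m R) (c : m → R) (i : m) :
    ∑ j, (1 - A) i j ^ 2 * c j
      = (1 - A i i) ^ 2 * c i + ∑ k ∈ Finset.univ.erase i, A i k ^ 2 * c k := by
  rw [← Finset.add_sum_erase _ _ (Finset.mem_univ i), sub_apply, one_apply_eq]
  congr 1
  refine Finset.sum_congr rfl fun k hk => ?_
  rw [sub_apply, one_apply_ne (Finset.ne_of_mem_erase hk).symm, zero_sub, neg_sq]

end Matrix

section SimpleRegression

open Finset Matrix

variable {ι : Type*} [Fintype ι] {t : ι → ℝ} {m : ℝ}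

lemma sum_eq_card_mul_of_eq_mean (hm : m = (Fintype.card ι : ℝ)⁻¹ * ∑ k, t k) :
    ∑ k, t k = Fintype.card ι * m := by
  rcases isEmpty_or_nonempty ι with hι | hι
  · simp
  · rw [hm, mul_inv_cancel_left₀ (Nat.cast_ne_zero.2 Fintype.card_ne_zero)]

lemma sum_sub_mean_eq_zero (hm : m = (Fintype.card ι : ℝ)⁻¹ * ∑ k, t k) :
    ∑ k, (t k - m) = 0 := by
  rw [sum_sub_distrib, sum_eq_card_mul_of_eq_mean hm, sum_const, card_univ, nsmul_eq_mul,
    sub_self]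

lemma sum_sub_mean_sq (hm : m = (Fintype.card ι : ℝ)⁻¹ * ∑ k, t k) :
    ∑ k, (t k - m) ^ 2 = ∑ k, t k ^ 2 - m * ∑ k, t k :=
  calc ∑ k, (t k - m) ^ 2 = ∑ k, (t k ^ 2 - m * t k) - m * ∑ k, (t k - m) := by
        rw [mul_sum, ← sum_sub_distrib]
        exact sum_congr rfl fun k _ => by ring
    _ = ∑ k, t k ^ 2 - m * ∑ k, t k := by
        rw [sum_sub_mean_eq_zero hm, mul_zero, sub_zero, sum_sub_distrib, mul_sum]

lemma sum_sq_sub_ne_zero (h : ∃ i j, t i ≠ t j) (m : ℝ) : ∑ k, (t k - m) ^ 2 ≠ 0 := by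
  obtain ⟨i, j, hij⟩ := h
  intro hzero
  have hall := (sum_eq_zero_iff_of_nonneg fun k _ => sq_nonneg (t k - m)).1 hzero
  have hi := sub_eq_zero.1 (pow_eq_zero_iff two_ne_zero |>.1 (hall i (mem_univ i)))
  have hj := sub_eq_zero.1 (pow_eq_zero_iff two_ne_zero |>.1 (hall j (mem_univ j)))
  exact hij (hi.trans hj.symm)

variable {U : Matrix ι (Fin 2) ℝ}

lemma transpose_mul_self_of_intercept_slope (hU : ∀ i, U i 0 = 1 ∧ U i 1 = t i) :
    Uᵀ * U = !![(Fintype.card ι : ℝ), ∑ k, t k; ∑ k, t k, ∑ k, t k ^ 2] := by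
  ext a b
  fin_cases a <;> fin_cases b <;> simp [Matrix.mul_apply, hU, sq]

lemma simpleRegression_slope_weight (hU : ∀ i, U i 0 = 1 ∧ U i 1 = t i)
    (hm : m = (Fintype.card ι : ℝ)⁻¹ * ∑ k, t k) (hS : ∑ k, (t k - m) ^ 2 ≠ 0) (j : ι) :
    ((Uᵀ * U)⁻¹ * Uᵀ) 1 j = (t j - m) / ∑ k, (t k - m) ^ 2 := by
  have hcard : (Fintype.card ι : ℝ) ≠ 0 := by
    refine Nat.cast_ne_zero.2 fun h => hS ?_
    simp [Fintype.card_eq_zero_iff.1 h]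
  have hdet : (Uᵀ * U).det = Fintype.card ι * ∑ k, (t k - m) ^ 2 := by
    rw [transpose_mul_self_of_intercept_slope hU, Matrix.det_fin_two_of, sum_sub_mean_sq hm,
      sum_eq_card_mul_of_eq_mean hm]
    ring
  rw [Matrix.inv_def, hdet, transpose_mul_self_of_intercept_slope hU, Matrix.adjugate_fin_two_of,
    Ring.inverse_eq_inv', Matrix.mul_apply, Fin.sum_univ_two]
  simp only [sum_eq_card_mul_of_eq_mean hm, Matrix.smul_apply, of_apply, cons_val', cons_val_zero,
    cons_val_fin_one, cons_val_one, smul_eq_mul, transpose_apply, hU j, mul_one]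
  field_simp
  ring

end SimpleRegression

lemma Real.abs_log_le_abs_add_abs_indicator (x : ℝ) :
    |Real.log x| ≤ |x| + |(Set.Icc (-1) 1).indicator Real.log x| := by
  by_cases hx : x ∈ Set.Icc (-1 : ℝ) 1
  · rw [Set.indicator_of_mem hx]
    exact le_add_of_nonneg_left (abs_nonneg x)
  · have h1 : 1 ≤ |x| := by
      rw [Set.mem_Icc, not_and_or, not_le, not_le] at hx
      rcases hx with hx | hx
      · rw [abs_of_neg (by linarith)]; linarith
      · rw [abs_of_pos (by linarith)]; linarith
    rw [Set.indicator_of_notMem hx, abs_zero, add_zero, ← Real.log_abs,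
      abs_of_nonneg (Real.log_nonneg h1)]
    exact Real.log_le_self (abs_nonneg x)

namespace ProbabilityTheory

open MeasureTheory Matrix Real Set

lemma gaussianPDFReal_le_inv_sqrt (m : ℝ) (v : ℝ≥0) (x : ℝ) :
    gaussianPDFReal m v x ≤ (√(2 * π * v))⁻¹ := by
  refine mul_le_of_le_one_right (by positivity) (exp_le_one_iff.2 ?_)
  exact div_nonpos_of_nonpos_of_nonneg (neg_nonpos.2 (sq_nonneg _)) (by positivity)

lemma gaussianReal_le_smul_volume (m : ℝ) {v : ℝ≥0} (hv : v ≠ 0) :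
    gaussianReal m v ≤ ENNReal.ofReal (√(2 * π * v))⁻¹ • volume := by
  rw [gaussianReal_of_var_ne_zero m hv, ← withDensity_const]
  exact withDensity_mono (ae_of_all _ fun x => ENNReal.ofReal_le_ofReal
    (gaussianPDFReal_le_inv_sqrt m v x))

lemma integrable_log_gaussianReal (m : ℝ) {v : ℝ≥0} (hv : v ≠ 0) :
    Integrable log (gaussianReal m v) := by
  have hnear : IntegrableOn log (Icc (-1) 1) (gaussianReal m v) := by
    have hvol : IntegrableOn log (Icc (-1) 1) :=
      (intervalIntegrable_iff_integrableOn_Icc_of_le (by norm_num)).1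
        intervalIntegral.intervalIntegrable_log'
    refine IntegrableOn.mono ?_ subset_rfl (gaussianReal_le_smul_volume m hv)
    rw [IntegrableOn, Measure.restrict_smul]
    exact hvol.smul_measure ENNReal.ofReal_ne_top
  have hfar : Integrable (fun x => |x|) (gaussianReal m v) :=
    ((memLp_id_gaussianReal 1).integrable le_rfl).abs
  exact (hfar.add (hnear.integrable_indicator measurableSet_Icc).abs).mono'
    measurable_log.aestronglyMeasurable (ae_of_all _ abs_log_le_abs_add_abs_indicator)

lemma integrable_log_sq_gaussianReal (m : ℝ) {v : ℝ≥0} (hv : v ≠ 0) :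
    Integrable (fun x => log (x ^ 2)) (gaussianReal m v) := by
  simpa only [log_pow, Nat.cast_ofNat] using (integrable_log_gaussianReal m hv).const_mul 2

lemma integral_log_sq_gaussianReal {v : ℝ≥0} (hv : v ≠ 0) :
    ∫ x, log (x ^ 2) ∂gaussianReal 0 v = log v + ∫ x, log (x ^ 2) ∂gaussianReal 0 1 := by
  have hscale : HasLaw (fun x => √v * x) (gaussianReal 0 v) (gaussianReal 0 1) := by
    have h := gaussianReal_const_mul (HasLaw.id (μ := gaussianReal 0 1)) (√v : ℝ)
    rwa [mul_zero, mul_one, show NNReal.mk _ _ = v from NNReal.eq (sq_sqrt v.coe_nonneg)] at h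
  have hne : ∀ᵐ x ∂gaussianReal 0 1, x ≠ 0 :=
    (gaussianReal_absolutelyContinuous 0 one_ne_zero).ae_le (volume.ae_ne 0)
  have hlog : ∀ᵐ x ∂gaussianReal 0 1, log ((√v * x) ^ 2) = log v + log (x ^ 2) :=
    hne.mono fun x hx => by
      rw [mul_pow, sq_sqrt v.coe_nonneg, log_mul (NNReal.coe_ne_zero.2 hv) (pow_ne_zero 2 hx)]
  rw [← hscale.integral_comp (integrable_log_sq_gaussianReal 0 hv).aestronglyMeasurable,
    Function.comp_def, integral_congr_ae hlog,
    integral_add (integrable_const _) (integrable_log_sq_gaussianReal 0 one_ne_zero),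
    integral_const, probReal_univ, one_smul]

variable {Ω ι : Type*} {mΩ : MeasurableSpace Ω} {P : Measure Ω}

lemma HasLaw.integrable_log_sq {X : Ω → ℝ} {m : ℝ} {v : ℝ≥0}
    (hX : HasLaw X (gaussianReal m v) P) (hv : v ≠ 0) :
    Integrable (fun ω => log (X ω ^ 2)) P :=
  (hX.map_eq ▸ integrable_log_sq_gaussianReal m hv).comp_aemeasurable hX.aemeasurable

lemma HasLaw.integral_log_sq {X : Ω → ℝ} {v : ℝ≥0} (hX : HasLaw X (gaussianReal 0 v) P)
    (hv : v ≠ 0) :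
    P[fun ω => log (X ω ^ 2)] = log v + ∫ x, log (x ^ 2) ∂gaussianReal 0 1 :=
  (hX.integral_comp (integrable_log_sq_gaussianReal 0 hv).aestronglyMeasurable).trans
    (integral_log_sq_gaussianReal hv)

lemma iIndepFun.hasLaw_sum_gaussianReal [IsProbabilityMeasure P] {X : ι → Ω → ℝ}
    (hind : iIndepFun X P) {m : ι → ℝ} {v : ι → ℝ≥0}
    (hX : ∀ i, HasLaw (X i) (gaussianReal (m i) (v i)) P) (s : Finset ι) :
    HasLaw (fun ω => ∑ i ∈ s, X i ω) (gaussianReal (∑ i ∈ s, m i) (∑ i ∈ s, v i)) P := by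
  classical
  induction s using Finset.induction_on with
  | empty =>
    simpa only [Finset.sum_empty, gaussianReal_zero_var] using
      hasLaw_dirac_of_ae_eq (P := P) (ae_of_all _ fun _ => rfl)
  | insert i s hi ih =>
    have hindep : IndepFun (X i) (fun ω => ∑ j ∈ s, X j ω) P := by
      simpa only [Finset.sum_fn] using
        (hind.indepFun_finsetSum_of_notMem₀ (fun j => (hX j).aemeasurable) hi).symm
    simp only [Finset.sum_insert hi]
    exact ⟨(hX i).aemeasurable.add ih.aemeasurable,
      gaussianReal_add_gaussianReal_of_indepFun hindep (hX i).map_eq ih.map_eq⟩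

lemma iIndepFun.hasLaw_mulVec_gaussianReal [IsProbabilityMeasure P] [Fintype ι] {κ : Type*}
    {X : ι → Ω → ℝ} (hind : iIndepFun X P) {m : ι → ℝ} {v : ι → ℝ≥0}
    (hX : ∀ j, HasLaw (X j) (gaussianReal (m j) (v j)) P) (A : Matrix κ ι ℝ) (i : κ) :
    HasLaw (fun ω => (A *ᵥ fun j => X j ω) i)
      (gaussianReal ((A *ᵥ m) i) (∑ j, ⟨A i j ^ 2, sq_nonneg _⟩ * v j)) P :=
  (hind.comp (fun j x => A i j * x) fun _ => measurable_const_mul _).hasLaw_sum_gaussianReal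
    (fun j => gaussianReal_const_mul (hX j) (A i j)) Finset.univ

lemma hasLaw_one_sub_mulVec_add_gaussianReal [IsProbabilityMeasure P] [Fintype ι]
    [DecidableEq ι] {κ : Type*} [Fintype κ] {H : Matrix ι ι ℝ} {V : Matrix ι κ ℝ} (hHV : H * V = V)
    {ε : ι → Ω → ℝ} (hind : iIndepFun ε P) {v : ι → ℝ≥0}
    (hε : ∀ j, HasLaw (ε j) (gaussianReal 0 (v j)) P) (β : κ → ℝ) (i : ι) :
    HasLaw (fun ω => ((1 - H) *ᵥ (V *ᵥ β + fun j => ε j ω)) i)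
      (gaussianReal 0 (∑ j, ⟨(1 - H) i j ^ 2, sq_nonneg _⟩ * v j)) P := by
  simp_rw [one_sub_mulVec_add_of_mul_eq hHV]
  simpa only [mulVec_zero, Pi.zero_apply] using
    hind.hasLaw_mulVec_gaussianReal (m := 0) hε (1 - H) i

end ProbabilityTheory

open MeasureTheory ProbabilityTheory Matrix Finset

theorem expectation_skedastic_slope_general
    {N M : ℕ}
    {Ω : Type*} [MeasurableSpace Ω] (μ : Measure Ω) [IsProbabilityMeasure μ]
    (V : Matrix (Fin N) (Fin (M + 1)) ℝ) (hV : IsUnit (Vᵀ * V).det)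
    (H : Matrix (Fin N) (Fin N) ℝ) (hH : H = V * (Vᵀ * V)⁻¹ * Vᵀ)
    (σ : Fin N → ℝ)
    (ε : Fin N → Ω → ℝ) (hmeas : ∀ i, Measurable (ε i))
    (hindep : iIndepFun ε μ)
    (hgauss : ∀ i, Measure.map (ε i) μ = gaussianReal 0 ⟨σ i ^ 2, sq_nonneg (σ i)⟩)
    (β : Fin (M + 1) → ℝ)
    (y : Fin N → Ω → ℝ) (hy : ∀ i ω, y i ω = V.mulVec β i + ε i ω)
    (e : Fin N → Ω → ℝ) (he : ∀ i ω, e i ω = (1 - H).mulVec (fun j => y j ω) i)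
    -- the DTG variances `s_i²` and the skedastic design matrix `U`
    (s2 : Fin N → ℝ)
    (hne : ∃ i j, Real.log (s2 i) ≠ Real.log (s2 j))
    (U : Matrix (Fin N) (Fin 2) ℝ)
    (hU : ∀ i, U i 0 = 1 ∧ U i 1 = Real.log (s2 i))
    -- the skedastic coefficient estimators `(γ̂₀, γ̂₁)ᵀ = (UᵀU)⁻¹ Uᵀ log(e²)`
    (γhat : Ω → Fin 2 → ℝ)
    (hγhat : ∀ x, γhat x = ((Uᵀ * U)⁻¹ * Uᵀ).mulVec (fun i => Real.log (e i x ^ 2)))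
    -- `m̄`, the `v_i`, and the standardized residuals `Z_i`
    (mbar : ℝ) (hmbar : mbar = (N : ℝ)⁻¹ * ∑ k, Real.log (s2 k))
    (v : Fin N → ℝ)
    (hv : ∀ i, v i = (1 - H i i) ^ 2 * σ i ^ 2 + ∑ k ∈ univ.erase i, H i k ^ 2 * σ k ^ 2)
    (hvpos : ∀ i, 0 < v i)
    :
    μ[fun x => γhat x 1]
      = (∑ i, (Real.log (s2 i) - mbar) * Real.log (v i))
        / ∑ k, (Real.log (s2 k) - mbar) ^ 2 := by
  set L : Fin N → ℝ := fun i => Real.log (s2 i)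
  set S := ∑ k, (L k - mbar) ^ 2
  have hmean : mbar = (Fintype.card (Fin N) : ℝ)⁻¹ * ∑ k, L k := by simpa using hmbar
  have hγ : ∀ x, γhat x 1 = ∑ j, (L j - mbar) / S * Real.log (e j x ^ 2) := fun x => by
    simp only [hγhat, mulVec, dotProduct,
      simpleRegression_slope_weight hU hmean (sum_sq_sub_ne_zero hne mbar)]
    rfl
  set w : Fin N → ℝ≥0 := fun i => ∑ j, ⟨(1 - H) i j ^ 2, sq_nonneg _⟩ * ⟨σ j ^ 2, sq_nonneg _⟩
  have hlaw : ∀ i, HasLaw (e i) (gaussianReal 0 (w i)) μ := fun i =>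
    (hasLaw_one_sub_mulVec_add_gaussianReal (hH ▸ mul_nonsing_inv_mul_mul_self V Vᵀ hV) hindep
      (fun j => ⟨(hmeas j).aemeasurable, hgauss j⟩) β i).congr
      (ae_of_all _ fun ω => by
        rw [he, show (fun j => y j ω) = V *ᵥ β + fun j => ε j ω from funext (hy · ω)])
  have hw : ∀ i, (w i : ℝ) = v i := fun i => by
    rw [hv, ← sum_sq_one_sub_apply_mul H (fun k => σ k ^ 2) i, NNReal.coe_sum]
    rfl
  have hw0 : ∀ i, w i ≠ 0 := fun i h => (hvpos i).ne' (by rw [← hw, h, NNReal.coe_zero])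
  calc μ[fun x => γhat x 1]
      = ∑ j, (L j - mbar) / S * μ[fun x => Real.log (e j x ^ 2)] := by
        simp_rw [hγ]
        rw [integral_finsetSum _ fun j _ => ((hlaw j).integrable_log_sq (hw0 j)).const_mul _]
        simp only [integral_const_mul]
    _ = ∑ j, (L j - mbar) / S * (Real.log (v j) + ∫ x, Real.log (x ^ 2) ∂gaussianReal 0 1) := by
        simp only [fun j => (hlaw j).integral_log_sq (hw0 j), hw]
    _ = (∑ j, (L j - mbar) * Real.log (v j)) / S := by
        simp only [mul_add, Finset.sum_add_distrib, ← Finset.sum_mul, ← Finset.sum_div,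
          sum_sub_mean_eq_zero hmean, zero_div, zero_mul, add_zero, div_mul_eq_mul_div]

/-- **Proposition 1 (expectation of the skedastic slope estimator)**:
`E[γ̂₁] = [Σ_i (log(s_i²) − m̄) log v_i] / [Σ_k (log(s_k²) − m̄)²]`. -/
theorem expectation_skedastic_slope
    {N M : ℕ} (hNM : N > M + 1)
    {Ω : Type*} [MeasurableSpace Ω] (μ : Measure Ω) [IsProbabilityMeasure μ]
    (V : Matrix (Fin N) (Fin (M + 1)) ℝ) (hV : IsUnit (Vᵀ * V).det)
    (H : Matrix (Fin N) (Fin N) ℝ) (hH : H = V * (Vᵀ * V)⁻¹ * Vᵀ)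
    (σ : Fin N → ℝ) (hσ : ∀ i, 0 < σ i)
    (ε : Fin N → Ω → ℝ) (hmeas : ∀ i, Measurable (ε i))
    (hindep : iIndepFun ε μ)
    (hgauss : ∀ i, Measure.map (ε i) μ = gaussianReal 0 ⟨σ i ^ 2, sq_nonneg (σ i)⟩)
    (β : Fin (M + 1) → ℝ)
    (y : Fin N → Ω → ℝ) (hy : ∀ i ω, y i ω = V.mulVec β i + ε i ω)
    (e : Fin N → Ω → ℝ) (he : ∀ i ω, e i ω = (1 - H).mulVec (fun j => y j ω) i)
    -- the DTG variances `s_i²` and the skedastic design matrix `U`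
    (s2 : Fin N → ℝ) (hs2 : ∀ i, 0 < s2 i)
    (hne : ∃ i j, Real.log (s2 i) ≠ Real.log (s2 j))
    (U : Matrix (Fin N) (Fin 2) ℝ)
    (hU : ∀ i, U i 0 = 1 ∧ U i 1 = Real.log (s2 i))
    -- the skedastic coefficient estimators `(γ̂₀, γ̂₁)ᵀ = (UᵀU)⁻¹ Uᵀ log(e²)`
    (γhat : Ω → Fin 2 → ℝ)
    (hγhat : ∀ x, γhat x = ((Uᵀ * U)⁻¹ * Uᵀ).mulVec (fun i => Real.log (e i x ^ 2)))
    -- `m̄`, the `v_i`, and the standardized residuals `Z_i`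
    (mbar : ℝ) (hmbar : mbar = (N : ℝ)⁻¹ * ∑ k, Real.log (s2 k))
    (v : Fin N → ℝ)
    (hv : ∀ i, v i = (1 - H i i) ^ 2 * σ i ^ 2 + ∑ k ∈ univ.erase i, H i k ^ 2 * σ k ^ 2)
    (hvpos : ∀ i, 0 < v i)
    (Z : Fin N → Ω → ℝ) (hZ : ∀ i x, Z i x = e i x / Real.sqrt (v i))
    :
    μ[fun x => γhat x 1]
      = (∑ i, (Real.log (s2 i) - mbar) * Real.log (v i))
        / ∑ k, (Real.log (s2 k) - mbar) ^ 2 :=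
  expectation_skedastic_slope_general μ V hV H hH σ ε hmeas hindep hgauss β y hy e he s2 hne U hU
    γhat hγhat mbar hmbar v hv hvpos
end

section
/- Weighted least squares is the best linear unbiased estimator when the variances are known: for every (M+1)×N real matrix A with A V = I_{M+1}, the matrix A Ω Aᵀ − (Vᵀ Ω⁻¹ V)⁻¹ is positive semidefinite. Consequently, in the heteroskedastic linear model y = Vβ + ε with E[ε] = 0 and Cov(ε) = Ω, every linear unbiased estimator β̃ = A y of β has covariance A Ω Aᵀ dominating, in the Loewner order, the covariance (Vᵀ Ω⁻¹ V)⁻¹ of the weighted least squares estimator β̂ = (Vᵀ Ω⁻¹ V)⁻¹ Vᵀ Ω⁻¹ y. -/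
open Matrix

open scoped ComplexOrder

/-!
Let `S = Vᴴ Ω⁻¹ V` and let `G = S⁻¹ Vᴴ Ω⁻¹` be the weighted least squares estimator. For every
left inverse `A` of `V` one has `A Ω Gᴴ = S⁻¹`; since `G` is itself a left inverse of `V`, all
four terms of `(A - G) Ω (A - G)ᴴ` other than `A Ω Aᴴ` equal `± S⁻¹`, so
`A Ω Aᴴ - S⁻¹ = (A - G) Ω (A - G)ᴴ`, which is positive semidefinite.
-/

namespace Matrix

variable {m n 𝕜 : Type*} [Fintype m] [Fintype n] [DecidableEq m] [DecidableEq n] [RCLike 𝕜]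

noncomputable def wlsEstimator (Ω : Matrix n n 𝕜) (V : Matrix n m 𝕜) : Matrix m n 𝕜 :=
  (Vᴴ * Ω⁻¹ * V)⁻¹ * Vᴴ * Ω⁻¹

omit [DecidableEq n] in
theorem mulVec_injective_of_mul_eq_one {R : Type*} [Semiring R] {A : Matrix m n R}
    {V : Matrix n m R} (hA : A * V = 1) : Function.Injective V.mulVec :=
  Function.LeftInverse.injective (g := A.mulVec) fun x => by
    rw [mulVec_mulVec, hA, one_mulVec]

theorem mul_mul_conjTranspose_wlsEstimator {Ω : Matrix n n 𝕜} {V : Matrix n m 𝕜}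
    {A : Matrix m n 𝕜} (hΩ : Ω.IsHermitian) (hΩu : IsUnit Ω) (hA : A * V = 1) :
    A * Ω * (wlsEstimator Ω V)ᴴ = (Vᴴ * Ω⁻¹ * V)⁻¹ := by
  have hS : (Vᴴ * Ω⁻¹ * V).IsHermitian := isHermitian_conjTranspose_mul_mul V hΩ.inv
  rw [wlsEstimator, conjTranspose_mul, conjTranspose_mul, conjTranspose_nonsing_inv,
    conjTranspose_nonsing_inv, hΩ.eq, hS.eq, conjTranspose_conjTranspose, ← Matrix.mul_assoc,
    ← Matrix.mul_assoc, Matrix.mul_assoc A, mul_nonsing_inv _ (Ω.isUnit_iff_isUnit_det.mp hΩu),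
    Matrix.mul_one, hA, Matrix.one_mul]

theorem wlsEstimator_mul_self {Ω : Matrix n n 𝕜} {V : Matrix n m 𝕜} (hΩ : Ω.PosDef)
    (hV : Function.Injective V.mulVec) : wlsEstimator Ω V * V = 1 := by
  rw [wlsEstimator, Matrix.mul_assoc, Matrix.mul_assoc, ← Matrix.mul_assoc Vᴴ]
  exact nonsing_inv_mul _ <|
    (isUnit_iff_isUnit_det _).mp (hΩ.inv.conjTranspose_mul_mul_same hV).isUnit

theorem posSemidef_mul_mul_conjTranspose_sub_inv {Ω : Matrix n n 𝕜} {V : Matrix n m 𝕜}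
    {A : Matrix m n 𝕜} (hΩ : Ω.PosDef) (hA : A * V = 1) :
    (A * Ω * Aᴴ - (Vᴴ * Ω⁻¹ * V)⁻¹).PosSemidef := by
  set G := wlsEstimator Ω V
  have hG : G * V = 1 := wlsEstimator_mul_self hΩ (mulVec_injective_of_mul_eq_one hA)
  have hAG := mul_mul_conjTranspose_wlsEstimator hΩ.1 hΩ.isUnit hA
  have hGG := mul_mul_conjTranspose_wlsEstimator hΩ.1 hΩ.isUnit hG
  have hGA : G * Ω * Aᴴ = (Vᴴ * Ω⁻¹ * V)⁻¹ := by
    have := congrArg conjTranspose hAG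
    rwa [conjTranspose_mul, conjTranspose_mul, conjTranspose_conjTranspose, hΩ.1.eq,
      ← Matrix.mul_assoc, conjTranspose_nonsing_inv,
      (isHermitian_conjTranspose_mul_mul V hΩ.1.inv).eq] at this
  have hdecomp : A * Ω * Aᴴ - (Vᴴ * Ω⁻¹ * V)⁻¹ = (A - G) * Ω * (A - G)ᴴ := by
    rw [conjTranspose_sub, Matrix.sub_mul, Matrix.sub_mul, Matrix.mul_sub, Matrix.mul_sub, hAG,
      hGA, hGG]
    abel
  rw [hdecomp]
  exact hΩ.posSemidef.mul_mul_conjTranspose_same _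

end Matrix

theorem weighted_least_squares_is_BLUE_general
    {N M : ℕ}
    (V : Matrix (Fin N) (Fin (M + 1)) ℝ)
    (σ2 : Fin N → ℝ) (hσ2 : ∀ i, 0 < σ2 i)
    (W : Matrix (Fin N) (Fin N) ℝ) (hW : W = Matrix.diagonal σ2)
    (A : Matrix (Fin (M + 1)) (Fin N) ℝ) (hA : A * V = 1) :
    (A * W * Aᵀ - (Vᵀ * W⁻¹ * V)⁻¹).PosSemidef := by
  subst hW
  simpa only [conjTranspose_eq_transpose_of_trivial] using
    posSemidef_mul_mul_conjTranspose_sub_inv (posDef_diagonal_iff.mpr hσ2) hA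

/-- **Weighted least squares is BLUE (Gauss–Markov with known variances)**: for every
`(M+1)×N` matrix `A` with `A V = I`, the matrix `A Ω Aᵀ − (Vᵀ Ω⁻¹ V)⁻¹` is positive
semidefinite; i.e. every linear unbiased estimator has covariance dominating, in the
Loewner order, the covariance of the weighted least squares estimator. -/
theorem weighted_least_squares_is_BLUE
    {N M : ℕ} (hNM : N > M + 1)
    (V : Matrix (Fin N) (Fin (M + 1)) ℝ) (hrank : V.rank = M + 1)
    (σ2 : Fin N → ℝ) (hσ2 : ∀ i, 0 < σ2 i)
    (W : Matrix (Fin N) (Fin N) ℝ) (hW : W = Matrix.diagonal σ2)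
    (A : Matrix (Fin (M + 1)) (Fin N) ℝ) (hA : A * V = 1) :
    (A * W * Aᵀ - (Vᵀ * W⁻¹ * V)⁻¹).PosSemidef :=
  weighted_least_squares_is_BLUE_general V σ2 hσ2 W hW A hA
end

section
/- Variance-reduction factorization under uncorrelatedness (Section 3.3): suppose each of g, s and s g² is uncorrelated with each of w, m, wm and m², i.e. E[g q] = E[g] E[q], E[s q] = E[s] E[q], and E[s g² q] = E[s g²] E[q] for every q ∈ {w, m, wm, m²}. Then taking expectations entrywise, E[g D] = E[g] · E[D], E[s g² D] = E[s g²] · E[D], and E[s D] = E[s] · E[D]. If moreover E[D] is invertible, then the Weighted PROCOVA asymptotic covariance matrix satisfies (E[g D])⁻¹ (E[s g² D]) (E[g D])⁻¹ = (E[s g²]/E[g]²) · (E[D])⁻¹, the PROCOVA asymptotic covariance matrix satisfies (E[D])⁻¹ (E[s D]) (E[D])⁻¹ = E[s] · (E[D])⁻¹, and hence the ratio of their (2,2) entries equals E[s g²] / (E[g]² E[s]) whenever E[s] · ((E[D])⁻¹)_{22} ≠ 0. -/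
open MeasureTheory ProbabilityTheory Matrix

/-- **Variance-reduction factorization under uncorrelatedness (Section 3.3)**: if each of
`g`, `s` and `s g²` is uncorrelated with each of `w, m, wm, m²`, then (taking expectations
entrywise) `E[g D] = E[g] E[D]`, `E[s g² D] = E[s g²] E[D]` and `E[s D] = E[s] E[D]`; if
moreover `E[D]` is invertible, the Weighted PROCOVA asymptotic covariance matrix satisfies
`(E[g D])⁻¹ (E[s g² D]) (E[g D])⁻¹ = (E[s g²]/E[g]²) (E[D])⁻¹`, the PROCOVA asymptotic
covariance matrix satisfies `(E[D])⁻¹ (E[s D]) (E[D])⁻¹ = E[s] (E[D])⁻¹`, and the ratio of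
their (2,2) entries equals `E[s g²]/(E[g]² E[s])`. -/
theorem variance_reduction_factorization
    {Ω : Type*} [MeasurableSpace Ω] (μ : Measure Ω) [IsProbabilityMeasure μ]
    (w m g s : Ω → ℝ)
    (hw : ∀ x, w x = 0 ∨ w x = 1) (hg : ∀ x, 0 < g x) (hs : ∀ x, 0 < s x)
    (D : Ω → Matrix (Fin 3) (Fin 3) ℝ)
    (hD : ∀ x, D x = !![1, w x, m x; w x, w x, w x * m x; m x, w x * m x, m x ^ 2])
    (hDint : ∀ i j, Integrable (fun x => D x i j) μ)
    (hgDint : ∀ i j, Integrable (fun x => g x * D x i j) μ)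
    (hsDint : ∀ i j, Integrable (fun x => s x * D x i j) μ)
    (hsg2Dint : ∀ i j, Integrable (fun x => s x * g x ^ 2 * D x i j) μ)
    (huncorr : ∀ q ∈ ({w, m, fun x => w x * m x, fun x => m x ^ 2} : Set (Ω → ℝ)),
      (∫ x, g x * q x ∂μ) = (∫ x, g x ∂μ) * ∫ x, q x ∂μ ∧
      (∫ x, s x * q x ∂μ) = (∫ x, s x ∂μ) * ∫ x, q x ∂μ ∧
      (∫ x, s x * g x ^ 2 * q x ∂μ) = (∫ x, s x * g x ^ 2 ∂μ) * ∫ x, q x ∂μ)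
    (ED EgD EsD Esg2D : Matrix (Fin 3) (Fin 3) ℝ)
    (hED : ∀ i j, ED i j = ∫ x, D x i j ∂μ)
    (hEgD : ∀ i j, EgD i j = ∫ x, g x * D x i j ∂μ)
    (hEsD : ∀ i j, EsD i j = ∫ x, s x * D x i j ∂μ)
    (hEsg2D : ∀ i j, Esg2D i j = ∫ x, s x * g x ^ 2 * D x i j ∂μ) :
    EgD = (∫ x, g x ∂μ) • ED ∧
    Esg2D = (∫ x, s x * g x ^ 2 ∂μ) • ED ∧
    EsD = (∫ x, s x ∂μ) • ED ∧
    (IsUnit ED.det →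
      EgD⁻¹ * Esg2D * EgD⁻¹ = ((∫ x, s x * g x ^ 2 ∂μ) / (∫ x, g x ∂μ) ^ 2) • ED⁻¹ ∧
      ED⁻¹ * EsD * ED⁻¹ = (∫ x, s x ∂μ) • ED⁻¹ ∧
      ((∫ x, s x ∂μ) * ED⁻¹ 1 1 ≠ 0 →
        (EgD⁻¹ * Esg2D * EgD⁻¹) 1 1 / (ED⁻¹ * EsD * ED⁻¹) 1 1
          = (∫ x, s x * g x ^ 2 ∂μ) / ((∫ x, g x ∂μ) ^ 2 * ∫ x, s x ∂μ))) := by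
  classical
  set c := ∫ x, g x ∂μ with hc
  set a := ∫ x, s x ∂μ with ha
  set b := ∫ x, s x * g x ^ 2 ∂μ with hb
  have key : ∀ (f : Ω → ℝ),
      (∀ q ∈ ({w, m, fun x => w x * m x, fun x => m x ^ 2} : Set (Ω → ℝ)),
        (∫ x, f x * q x ∂μ) = (∫ x, f x ∂μ) * ∫ x, q x ∂μ) →
      ∀ i j, (∫ x, f x * D x i j ∂μ) = (∫ x, f x ∂μ) * ∫ x, D x i j ∂μ := by
    intro f hf i j
    have h1 := hf w (by left; rfl)
    have h2 := hf m (by right; left; rfl)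
    have h3 := hf (fun x => w x * m x) (by right; right; left; rfl)
    have h4 := hf (fun x => m x ^ 2) (by right; right; right; rfl)
    fin_cases i <;> fin_cases j <;>
      simp only [hD, Matrix.cons_val', Matrix.cons_val_zero, Matrix.cons_val_one,
        Matrix.head_cons, Matrix.empty_val', Matrix.cons_val_fin_one, Matrix.head_fin_const,
        Matrix.cons_val_two, Matrix.tail_cons, Fin.mk_one, Fin.mk_zero] <;>
      first
        | exact h1 | exact h2 | exact h3 | exact h4 | simp
  have hfg : ∀ i j, (∫ x, g x * D x i j ∂μ) = c * ∫ x, D x i j ∂μ :=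
    key g (fun q hq => (huncorr q hq).1)
  have hfs : ∀ i j, (∫ x, s x * D x i j ∂μ) = a * ∫ x, D x i j ∂μ :=
    key s (fun q hq => (huncorr q hq).2.1)
  have hfb : ∀ i j, (∫ x, s x * g x ^ 2 * D x i j ∂μ) = b * ∫ x, D x i j ∂μ :=
    key (fun x => s x * g x ^ 2) (fun q hq => (huncorr q hq).2.2)
  have e1 : EgD = c • ED := by
    ext i j; rw [Matrix.smul_apply, smul_eq_mul, hEgD, hED, hfg]
  have e2 : Esg2D = b • ED := by
    ext i j; rw [Matrix.smul_apply, smul_eq_mul, hEsg2D, hED, hfb]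
  have e3 : EsD = a • ED := by
    ext i j; rw [Matrix.smul_apply, smul_eq_mul, hEsD, hED, hfs]
  refine ⟨e1, e2, e3, fun hinv => ?_⟩
  -- c > 0
  have hgint : Integrable g μ := by
    have := hgDint 0 0
    simpa [hD] using this
  have hcpos : 0 < c := by
    rw [hc]
    rw [MeasureTheory.integral_pos_iff_support_of_nonneg (fun x => (hg x).le) hgint]
    have : Function.support g = Set.univ := by
      ext x; simp [Function.mem_support, (hg x).ne']
    rw [this]; simp
  have hcne : c ≠ 0 := hcpos.ne'
  have hEDinv : ED⁻¹ * ED = 1 := Matrix.nonsing_inv_mul ED hinv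
  have hEDinv' : ED * ED⁻¹ = 1 := Matrix.mul_nonsing_inv ED hinv
  have hEgDinv : EgD⁻¹ = c⁻¹ • ED⁻¹ := by
    apply Matrix.inv_eq_left_inv
    rw [e1, Matrix.smul_mul, Matrix.mul_smul, hEDinv, smul_smul, inv_mul_cancel₀ hcne,
      one_smul]
  have w1 : EgD⁻¹ * Esg2D * EgD⁻¹ = (b / c ^ 2) • ED⁻¹ := by
    rw [hEgDinv, e2]
    rw [Matrix.smul_mul, Matrix.mul_smul, Matrix.smul_mul, Matrix.mul_smul, hEDinv,
      Matrix.smul_mul, Matrix.one_mul, smul_smul, smul_smul]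
    congr 1
    rw [pow_two, div_eq_mul_inv, mul_inv]
    ring
  have w2 : ED⁻¹ * EsD * ED⁻¹ = a • ED⁻¹ := by
    rw [e3, Matrix.mul_smul, Matrix.smul_mul, Matrix.mul_assoc, hEDinv', Matrix.mul_one]
  refine ⟨w1, w2, fun hne => ?_⟩
  rw [w1, w2, Matrix.smul_apply, Matrix.smul_apply, smul_eq_mul, smul_eq_mul]
  generalize hX : ED⁻¹ 1 1 = X at hne ⊢
  have ha0 : a ≠ 0 := fun h => hne (by simp [h])
  have hX0 : X ≠ 0 := fun h => hne (by simp [h])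
  field_simp
end
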